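/- Lemma (squeezing of the empirical pushforward covariance on the unobserved subspace). Let u^(1),…,u^(N) ∈ H, let m̄ := (1/N)Σ_n u^(n) and Ĉ := (1/N)Σ_n (u^(n) − m̄) ⊗ (u^(n) − m̄). Set w^(n) := Ψ(Π(u^(n))), w̄ := (1/N)Σ_n w^(n) and Σ̂ := (1/N)Σ_n (w^(n) − w̄) ⊗ (w^(n) − w̄). Then Tr((id − P) Σ̂ (id − P)) ≤ α · ( Tr(Ĉ) + β · Tr(Hob Ĉ Hob†) ). -/

import Mathlib

/- Common setting for "Long-time accuracy of ensemble Kalman filters". -/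

open MeasureTheory ProbabilityTheory Filter
open scoped RealInnerProductSpace ENNReal NNReal

noncomputable section

namespace EnKF

variable {H : Type*} [NormedAddCommGroup H] [InnerProductSpace ℝ H] [FiniteDimensional ℝ H]

/-- The outer product `u ⊗ v`, acting as `x ↦ ⟪v, x⟫ • u`. -/
def outer (u v : H) : H →L[ℝ] H := (innerSL ℝ v).smulRight u

/-- Trace of a continuous linear operator. -/
def opTrace (T : H →L[ℝ] H) : ℝ := LinearMap.trace ℝ H T.toLinearMap

variable {k : ℕ}

/-- `P := Hob† ∘ Hob`, the orthogonal projection onto the observed subspace. -/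
def Pop (Hob : H →L[ℝ] EuclideanSpace ℝ (Fin k)) : H →L[ℝ] H :=
  (ContinuousLinearMap.adjoint Hob).comp Hob

/-- The Lyapunov norm `V(u) = (‖u‖² + β‖Pu‖²)^(1/2)`. -/
def Vnorm (Hob : H →L[ℝ] EuclideanSpace ℝ (Fin k)) (β : ℝ) (u : H) : ℝ :=
  Real.sqrt (‖u‖ ^ 2 + β * ‖Pop Hob u‖ ^ 2)

/-- The Kalman gain `K(S) = S Hob† (Hob S Hob† + ε² R)⁻¹`. -/
def kalmanGain (Hob : H →L[ℝ] EuclideanSpace ℝ (Fin k))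
    (R : EuclideanSpace ℝ (Fin k) →L[ℝ] EuclideanSpace ℝ (Fin k)) (ε : ℝ)
    (S : H →L[ℝ] H) : EuclideanSpace ℝ (Fin k) →L[ℝ] H :=
  (S.comp (ContinuousLinearMap.adjoint Hob)).comp
    (Ring.inverse ((Hob.comp (S.comp (ContinuousLinearMap.adjoint Hob))) + ε ^ 2 • R))

/-- The standard Gaussian measure on a finite-dimensional inner product space. -/
def stdGaussian (H : Type*) [NormedAddCommGroup H] [InnerProductSpace ℝ H]
    [FiniteDimensional ℝ H] [MeasurableSpace H] [BorelSpace H] : Measure H :=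
  Measure.map (fun x : Fin (Module.finrank ℝ H) → ℝ =>
      ∑ i, x i • (stdOrthonormalBasis ℝ H) i)
    (Measure.pi fun _ => gaussianReal 0 1)

/-- The Gaussian measure on `H` with mean `m` whose covariance is `S ∘ S` (for `S`
positive self-adjoint): the law of `m + S g` for a standard Gaussian `g`. -/
def gaussianOf [MeasurableSpace H] [BorelSpace H] (m : H) (S : H →L[ℝ] H) : Measure H :=
  Measure.map (fun x => m + S x) (stdGaussian H)

/-- Assumption 1: absorbing ball of radius `r`, local Lipschitz continuity and the
squeezing property for the dynamics `Ψ`, together with the properties of the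
`V`-metric projection `Pr` onto the ball. -/
structure Assumption1 (Hob : H →L[ℝ] EuclideanSpace ℝ (Fin k)) (β r : ℝ)
    (Ψ Pr : H → H) (L α : ℝ) : Prop where
  hHob : Hob.comp (ContinuousLinearMap.adjoint Hob)
      = ContinuousLinearMap.id ℝ (EuclideanSpace ℝ (Fin k))
  hβ : 0 ≤ β
  hr : 0 < r
  hΨB : ∀ u : H, ‖u‖ ≤ r → ‖Ψ u‖ ≤ r
  hL : 0 < L
  hLip : ∀ u v : H, ‖u‖ ≤ r → ‖v‖ ≤ r →
    Vnorm Hob β (Ψ u - Ψ v) ^ 2 ≤ L * Vnorm Hob β (u - v) ^ 2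
  hα0 : 0 < α
  hα1 : α < 1
  hSqueeze : ∀ u v : H, ‖u‖ ≤ r → ‖v‖ ≤ r →
    Vnorm Hob β ((Ψ u - Ψ v) - Pop Hob (Ψ u - Ψ v)) ^ 2 ≤ α * Vnorm Hob β (u - v) ^ 2
  hPrB : ∀ u : H, ‖Pr u‖ ≤ r
  hPrId : ∀ u : H, ‖u‖ ≤ r → Pr u = u
  hPrNonexp : ∀ u v : H, Vnorm Hob β (Pr u - Pr v) ≤ Vnorm Hob β (u - v)

/-- Index type for the collection of all random sources driving the filter:
the initial-ensemble Gaussians, the inflation noises, and the observation noises. -/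
abbrev NoiseIdx (N : ℕ) : Type := Fin N ⊕ ((ℕ × Fin N) ⊕ ℕ)

abbrev noiseType (H : Type) (k N : ℕ) : NoiseIdx N → Type :=
  fun i => match i with
  | .inl _ => H
  | .inr _ => EuclideanSpace ℝ (Fin k)

abbrev noiseMS (H : Type) [MeasurableSpace H] (k N : ℕ) :
    ∀ i : NoiseIdx N, MeasurableSpace (noiseType H k N i) :=
  fun i => match i with
  | .inl _ => ‹MeasurableSpace H›
  | .inr _ => inferInstance

/-- The combined family of random sources, used to state their mutual independence. -/
def noiseFun {Ω : Type*} {H : Type} {k N : ℕ}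
    (g : Fin N → Ω → H) (ζ : ℕ → Fin N → Ω → EuclideanSpace ℝ (Fin k))
    (η : ℕ → Ω → EuclideanSpace ℝ (Fin k)) :
    ∀ i : NoiseIdx N, Ω → noiseType H k N i :=
  fun i => match i with
  | .inl n => g n
  | .inr (.inl p) => ζ p.1 p.2
  | .inr (.inr j) => η j

/-- The σ-algebra generated by the initial ensemble, the inflation noises `ξ_i = √a Hob† ζ_i`
and the observations `y_i = Hob u_i + ε η_i` for `1 ≤ i ≤ j`. -/
def enkfFiltration {Ω : Type*} [MeasurableSpace H] {N : ℕ}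
    (Hob : H →L[ℝ] EuclideanSpace ℝ (Fin k)) (u : ℕ → H) (ε : ℝ)
    (g : Fin N → Ω → H) (ζ : ℕ → Fin N → Ω → EuclideanSpace ℝ (Fin k))
    (η : ℕ → Ω → EuclideanSpace ℝ (Fin k)) (j : ℕ) : MeasurableSpace Ω :=
  (⨆ n : Fin N, MeasurableSpace.comap (g n) ‹MeasurableSpace H›)
  ⊔ (⨆ i ∈ Set.Icc 1 j, ⨆ n : Fin N, MeasurableSpace.comap (ζ i n) inferInstance)
  ⊔ (⨆ i ∈ Set.Icc 1 j, MeasurableSpace.comap (fun ω => Hob (u i) + ε • η i ω) inferInstance)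

/-- A realization of the square-root ensemble Kalman filter (Algorithm 1), with
prediction map `Ψpred` (the true dynamics `Ψ`, or a surrogate `Ψˢ`), ball projection `Pr`,
signal `u`, noise covariance `R`, ensemble size `N`, initial mean/covariance `m0, C0`,
inflation parameter `a` and noise level `ε`, driven by observations
`y_j = Hob (u j) + ε • η_j`. -/
structure EnKFRun {H : Type} [NormedAddCommGroup H] [InnerProductSpace ℝ H]
    [FiniteDimensional ℝ H] [MeasurableSpace H] [BorelSpace H] {k : ℕ}
    (Hob : H →L[ℝ] EuclideanSpace ℝ (Fin k))
    (Ψpred Pr : H → H) (u : ℕ → H)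
    (R : EuclideanSpace ℝ (Fin k) →L[ℝ] EuclideanSpace ℝ (Fin k))
    (N : ℕ) (m0 : H) (C0 : H →L[ℝ] H) (a ε : ℝ)
    (Ω : Type) [MeasurableSpace Ω] (μ : Measure Ω) where
  /-- observation noises -/
  η : ℕ → Ω → EuclideanSpace ℝ (Fin k)
  /-- Gaussian sources for the initial ensemble -/
  g : Fin N → Ω → H
  /-- Gaussian sources for the inflation noises `ξ_j^(n) = √a • Hob† (ζ_j^(n))` -/
  ζ : ℕ → Fin N → Ω → EuclideanSpace ℝ (Fin k)
  /-- a square root of `C0` -/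
  sqrtC0 : H →L[ℝ] H
  /-- analysis ensembles (`U 0` is the initial ensemble) -/
  U : ℕ → Fin N → Ω → H
  /-- prediction ensembles -/
  v : ℕ → Fin N → Ω → H
  /-- prediction means `μ̂_j` -/
  μpred : ℕ → Ω → H
  /-- prediction covariances `Σ̂_j` -/
  Spred : ℕ → Ω → H →L[ℝ] H
  /-- analysis means `m̂_j` -/
  mhat : ℕ → Ω → H
  /-- analysis covariances `Ĉ_j` -/
  Chat : ℕ → Ω → H →L[ℝ] H
  hη_meas : ∀ j, Measurable (η j)
  hη_L2 : ∀ j, MemLp (η j) 2 μ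
  hη_mean : ∀ j, ∫ ω, η j ω ∂μ = 0
  hη_cov : ∀ j, ∫ ω, outer (η j ω) (η j ω) ∂μ = R
  hg_meas : ∀ n, Measurable (g n)
  hg_law : ∀ n, Measure.map (g n) μ = stdGaussian H
  hζ_meas : ∀ j n, Measurable (ζ j n)
  hζ_law : ∀ j n, Measure.map (ζ j n) μ = stdGaussian (EuclideanSpace ℝ (Fin k))
  hIndep : iIndepFun (m := noiseMS H k N) (noiseFun g ζ η) μ
  hC0_sa : IsSelfAdjoint C0
  hC0_pos : ∀ x : H, 0 ≤ ⟪C0 x, x⟫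
  hsqrt_sa : IsSelfAdjoint sqrtC0
  hsqrt_pos : ∀ x : H, 0 ≤ ⟪sqrtC0 x, x⟫
  hsqrt_sq : sqrtC0.comp sqrtC0 = C0
  hU0 : ∀ n ω, U 0 n ω = m0 + sqrtC0 (g n ω)
  hv : ∀ j n ω, v (j + 1) n ω
      = Ψpred (Pr (U j n ω)) + Real.sqrt a • (ContinuousLinearMap.adjoint Hob) (ζ (j + 1) n ω)
  hμpred : ∀ j ω, μpred (j + 1) ω = (N : ℝ)⁻¹ • ∑ n, v (j + 1) n ω
  hSpred : ∀ j ω, Spred (j + 1) ω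
      = (N : ℝ)⁻¹ • ∑ n, outer (v (j + 1) n ω - μpred (j + 1) ω) (v (j + 1) n ω - μpred (j + 1) ω)
  hmhat0 : ∀ ω, mhat 0 ω = (N : ℝ)⁻¹ • ∑ n, U 0 n ω
  hmhat_mean : ∀ j ω, mhat (j + 1) ω = (N : ℝ)⁻¹ • ∑ n, U (j + 1) n ω
  hmhat_analysis : ∀ j ω, mhat (j + 1) ω = μpred (j + 1) ω
      + kalmanGain Hob R ε (Spred (j + 1) ω)
          ((Hob (u (j + 1)) + ε • η (j + 1) ω) - Hob (μpred (j + 1) ω))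
  hChat_emp : ∀ j ω, Chat j ω
      = ((N : ℝ) - 1)⁻¹ • ∑ n, outer (U j n ω - mhat j ω) (U j n ω - mhat j ω)
  hChat_analysis : ∀ j ω, Chat (j + 1) ω
      = ((ContinuousLinearMap.id ℝ H)
          - (kalmanGain Hob R ε (Spred (j + 1) ω)).comp Hob).comp (Spred (j + 1) ω)
  hAdapted : ∀ j n, @Measurable Ω H (enkfFiltration Hob u ε g ζ η j) _ (U j n)

/-- The mean-field (Gaussian projected) filter, Algorithm 3, driven by an observation
sequence `y`, with prediction map `Ψpred`, ball projection `Pr`, inflation `Q = a • P`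
and noise level `ε`; `sqrtC j` is the positive self-adjoint square root of `C j`. -/
def IsMeanFieldRun [MeasurableSpace H] [BorelSpace H]
    (Hob : H →L[ℝ] EuclideanSpace ℝ (Fin k))
    (Ψpred Pr : H → H)
    (R : EuclideanSpace ℝ (Fin k) →L[ℝ] EuclideanSpace ℝ (Fin k)) (a ε : ℝ)
    (y : ℕ → EuclideanSpace ℝ (Fin k))
    (m : ℕ → H) (C : ℕ → H →L[ℝ] H) (μm : ℕ → H) (Sm : ℕ → H →L[ℝ] H)
    (sqrtC : ℕ → H →L[ℝ] H) : Prop :=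
  (∀ j, IsSelfAdjoint (C j)) ∧ (∀ j, ∀ x : H, 0 ≤ ⟪C j x, x⟫) ∧
  (∀ j, IsSelfAdjoint (sqrtC j)) ∧ (∀ j, ∀ x : H, 0 ≤ ⟪sqrtC j x, x⟫) ∧
  (∀ j, (sqrtC j).comp (sqrtC j) = C j) ∧
  (∀ j, μm (j + 1) = ∫ x, Ψpred (Pr x) ∂(gaussianOf (m j) (sqrtC j))) ∧
  (∀ j, Sm (j + 1) = ∫ x, outer (Ψpred (Pr x) - μm (j + 1)) (Ψpred (Pr x) - μm (j + 1))
      ∂(gaussianOf (m j) (sqrtC j))) ∧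
  (∀ j, m (j + 1) = μm (j + 1)
      + kalmanGain Hob R ε (Sm (j + 1) + a • Pop Hob) (y (j + 1) - Hob (μm (j + 1)))) ∧
  (∀ j, C (j + 1) = ((ContinuousLinearMap.id ℝ H)
      - (kalmanGain Hob R ε (Sm (j + 1) + a • Pop Hob)).comp Hob).comp
        (Sm (j + 1) + a • Pop Hob))

end EnKF

namespace EnKF

section Aux

variable {H : Type*} [NormedAddCommGroup H] [InnerProductSpace ℝ H] [FiniteDimensional ℝ H]

lemma outer_apply' (u v x : H) : outer u v x = ⟪v, x⟫ • u := rfl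

lemma opTrace_eq_sum (T : H →L[ℝ] H) :
    opTrace T = ∑ i, ⟪stdOrthonormalBasis ℝ H i, T (stdOrthonormalBasis ℝ H i)⟫ := by
  rw [opTrace, LinearMap.trace_eq_matrix_trace ℝ (stdOrthonormalBasis ℝ H).toBasis,
    Matrix.trace]
  simp [Matrix.diag, LinearMap.toMatrix_apply,
    ← (stdOrthonormalBasis ℝ H).repr_apply_apply]

lemma opTrace_outer (u v : H) : opTrace (outer u v) = ⟪v, u⟫ := by
  rw [opTrace_eq_sum]
  simp only [outer_apply', real_inner_smul_right]
  simpa [mul_comm] using (stdOrthonormalBasis ℝ H).sum_inner_mul_inner v u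

variable {F : Type*} [NormedAddCommGroup F] [InnerProductSpace ℝ F] [FiniteDimensional ℝ F]

lemma conj_eq (A : H →L[ℝ] F) (B : F →L[ℝ] H) (c : ℝ) {N : ℕ} (d : Fin N → H) :
    A.comp (((c • ∑ n, outer (d n) (d n)) : H →L[ℝ] H).comp B)
      = c • ∑ n, outer (A (d n)) (ContinuousLinearMap.adjoint B (d n)) := by
  ext x
  simp [outer_apply', ContinuousLinearMap.sum_apply, map_sum, _root_.map_smul,
    ContinuousLinearMap.adjoint_inner_left]

lemma opTrace_conj (A : H →L[ℝ] F) (B : F →L[ℝ] H) (c : ℝ) {N : ℕ} (d : Fin N → H) :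
    opTrace (A.comp (((c • ∑ n, outer (d n) (d n)) : H →L[ℝ] H).comp B))
      = c * ∑ n, ⟪ContinuousLinearMap.adjoint B (d n), A (d n)⟫ := by
  rw [conj_eq, opTrace]
  push_cast [ContinuousLinearMap.coe_smul, ContinuousLinearMap.coe_sum]
  rw [_root_.map_smul, map_sum, smul_eq_mul]
  congr 1
  exact Finset.sum_congr rfl fun n _ => opTrace_outer _ _

lemma var_pair {E : Type*} [NormedAddCommGroup E] [InnerProductSpace ℝ E]
    {N : ℕ} (hN : 0 < N) (x : Fin N → E) :
    ∑ n, ∑ m, ‖x n - x m‖ ^ 2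
      = 2 * N * ∑ n, ‖x n - (N : ℝ)⁻¹ • ∑ j, x j‖ ^ 2 := by
  have hN' : (N : ℝ) ≠ 0 := Nat.cast_ne_zero.2 hN.ne'
  have h1 : ∀ a b : E, ‖a - b‖ ^ 2 = ‖a‖ ^ 2 - 2 * ⟪a, b⟫ + ‖b‖ ^ 2 := norm_sub_sq_real
  have hS : ∑ i, ∑ j, ⟪x i, x j⟫ = ‖∑ j, x j‖ ^ 2 := by
    rw [← real_inner_self_eq_norm_sq, sum_inner]
    simp [inner_sum]
  simp only [h1]
  simp only [Finset.sum_add_distrib, Finset.sum_sub_distrib, ← Finset.mul_sum,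
    ← Finset.sum_mul, inner_sum, sum_inner, Finset.sum_const, Finset.card_univ,
    Fintype.card_fin, nsmul_eq_mul, real_inner_smul_right, inner_sum,
    real_inner_self_eq_norm_sq, norm_smul, real_inner_smul_left,
    Real.norm_eq_abs, abs_inv, Nat.abs_cast]
  rw [hS]
  field_simp
  ring

end Aux

/-- **Squeezing of the empirical pushforward covariance on the unobserved subspace
(cf. the proof of Lemma 3.1).** Under Assumption 1, if `m̄` and `Ĉ` are the empirical mean
and covariance of `u⁽¹⁾,…,u⁽ᴺ⁾` and `Σ̂` is the empirical covariance of
`w⁽ⁿ⁾ = Ψ(Π(u⁽ⁿ⁾))`, then `Tr((id − P) Σ̂ (id − P)) ≤ α (Tr(Ĉ) + β Tr(Hob Ĉ Hob†))`. -/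
theorem empirical_pushforward_covariance_squeezing
    {H : Type*} [NormedAddCommGroup H] [InnerProductSpace ℝ H] [FiniteDimensional ℝ H]
    {k : ℕ} (Hob : H →L[ℝ] EuclideanSpace ℝ (Fin k))
    (β r L α : ℝ) (Ψ Pr : H → H)
    (A1 : Assumption1 Hob β r Ψ Pr L α)
    (N : ℕ) (u : Fin N → H)
    (mbar : H) (hmbar : mbar = (N : ℝ)⁻¹ • ∑ n, u n)
    (Chat : H →L[ℝ] H) (hChat : Chat = (N : ℝ)⁻¹ • ∑ n, outer (u n - mbar) (u n - mbar))
    (w : Fin N → H) (hw : ∀ n, w n = Ψ (Pr (u n)))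
    (wbar : H) (hwbar : wbar = (N : ℝ)⁻¹ • ∑ n, w n)
    (Shat : H →L[ℝ] H) (hShat : Shat = (N : ℝ)⁻¹ • ∑ n, outer (w n - wbar) (w n - wbar)) :
    opTrace (((ContinuousLinearMap.id ℝ H) - Pop Hob).comp
        (Shat.comp ((ContinuousLinearMap.id ℝ H) - Pop Hob)))
      ≤ α * (opTrace Chat
          + β * opTrace (Hob.comp (Chat.comp (ContinuousLinearMap.adjoint Hob)))) := by
  set Q : H →L[ℝ] H := (ContinuousLinearMap.id ℝ H) - Pop Hob with hQ
  have hβ : 0 ≤ β := A1.hβ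
  have hα : 0 ≤ α := A1.hα0.le
  -- adjoint facts
  have hQadj : ContinuousLinearMap.adjoint Q = Q := by
    rw [hQ, map_sub, ContinuousLinearMap.adjoint_id]
    congr 1
    rw [Pop, ContinuousLinearMap.adjoint_comp, ContinuousLinearMap.adjoint_adjoint]
  -- trace computations
  have hid : ∀ T : H →L[ℝ] H,
      T = (ContinuousLinearMap.id ℝ H).comp (T.comp (ContinuousLinearMap.id ℝ H)) := by
    intro T; ext x; simp
  have hL : opTrace (Q.comp (Shat.comp Q))
      = (N : ℝ)⁻¹ * ∑ n, ‖Q (w n - wbar)‖ ^ 2 := by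
    rw [hShat, opTrace_conj, hQadj]
    simp only [real_inner_self_eq_norm_sq]
  have hC : opTrace Chat = (N : ℝ)⁻¹ * ∑ n, ‖u n - mbar‖ ^ 2 := by
    conv_lhs => rw [hid Chat, hChat]
    rw [opTrace_conj, ContinuousLinearMap.adjoint_id]
    simp only [real_inner_self_eq_norm_sq, ContinuousLinearMap.id_apply]
  have hH : opTrace (Hob.comp (Chat.comp (ContinuousLinearMap.adjoint Hob)))
      = (N : ℝ)⁻¹ * ∑ n, ‖Hob (u n - mbar)‖ ^ 2 := by
    rw [hChat, opTrace_conj, ContinuousLinearMap.adjoint_adjoint]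
    simp only [real_inner_self_eq_norm_sq]
  rw [hL, hC, hH]
  rcases Nat.eq_zero_or_pos N with h0 | hN
  · subst h0
    simp [mul_nonneg, hα, hβ]
  have hNpos : (0 : ℝ) < (N : ℝ) := Nat.cast_pos.2 hN
  -- basic V-norm facts
  have hV2 : ∀ z : H, Vnorm Hob β z ^ 2 = ‖z‖ ^ 2 + β * ‖Pop Hob z‖ ^ 2 := by
    intro z
    rw [Vnorm]
    exact Real.sq_sqrt (add_nonneg (by positivity) (mul_nonneg hβ (by positivity)))
  have hPnorm : ∀ x : H, ‖Pop Hob x‖ ^ 2 = ‖Hob x‖ ^ 2 := by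
    intro x
    rw [← real_inner_self_eq_norm_sq, ← real_inner_self_eq_norm_sq]
    have : Pop Hob x = ContinuousLinearMap.adjoint Hob (Hob x) := rfl
    rw [this, ContinuousLinearMap.adjoint_inner_left]
    have := congrArg (fun T : _ →L[ℝ] _ => T (Hob x)) A1.hHob
    simp only [ContinuousLinearMap.comp_apply, ContinuousLinearMap.id_apply] at this
    rw [this]
  -- pairwise squeezing bound
  have key : ∀ n m, ‖Q (w n - w m)‖ ^ 2
      ≤ α * (‖u n - u m‖ ^ 2 + β * ‖Hob (u n - u m)‖ ^ 2) := by
    intro n m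
    have ha : ‖Pr (u n)‖ ≤ r := A1.hPrB _
    have hb : ‖Pr (u m)‖ ≤ r := A1.hPrB _
    have h1 := A1.hSqueeze (Pr (u n)) (Pr (u m)) ha hb
    have h2 : Vnorm Hob β (Pr (u n) - Pr (u m)) ^ 2 ≤ Vnorm Hob β (u n - u m) ^ 2 :=
      pow_le_pow_left₀ (Real.sqrt_nonneg _) (A1.hPrNonexp _ _) 2
    have hwz : w n - w m = Ψ (Pr (u n)) - Ψ (Pr (u m)) := by rw [hw n, hw m]
    have hQz : Q (w n - w m)
        = (Ψ (Pr (u n)) - Ψ (Pr (u m))) - Pop Hob (Ψ (Pr (u n)) - Ψ (Pr (u m))) := by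
      rw [hQ, ContinuousLinearMap.sub_apply, ContinuousLinearMap.id_apply, hwz]
    calc ‖Q (w n - w m)‖ ^ 2
        ≤ Vnorm Hob β ((Ψ (Pr (u n)) - Ψ (Pr (u m)))
            - Pop Hob (Ψ (Pr (u n)) - Ψ (Pr (u m)))) ^ 2 := by
          rw [hV2, hQz]
          have : 0 ≤ β * ‖Pop Hob ((Ψ (Pr (u n)) - Ψ (Pr (u m)))
              - Pop Hob (Ψ (Pr (u n)) - Ψ (Pr (u m))))‖ ^ 2 :=
            mul_nonneg hβ (by positivity)
          linarith
      _ ≤ α * Vnorm Hob β (Pr (u n) - Pr (u m)) ^ 2 := h1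
      _ ≤ α * Vnorm Hob β (u n - u m) ^ 2 := by
          exact mul_le_mul_of_nonneg_left h2 hα
      _ = α * (‖u n - u m‖ ^ 2 + β * ‖Hob (u n - u m)‖ ^ 2) := by
          rw [hV2, hPnorm]
  -- sums over pairs
  have hsum : ∑ n, ∑ m, ‖Q (w n - w m)‖ ^ 2
      ≤ α * (∑ n, ∑ m, ‖u n - u m‖ ^ 2) + α * β * (∑ n, ∑ m, ‖Hob (u n - u m)‖ ^ 2) := by
    calc ∑ n, ∑ m, ‖Q (w n - w m)‖ ^ 2
        ≤ ∑ n, ∑ m, α * (‖u n - u m‖ ^ 2 + β * ‖Hob (u n - u m)‖ ^ 2) :=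
          Finset.sum_le_sum fun n _ => Finset.sum_le_sum fun m _ => key n m
      _ = α * (∑ n, ∑ m, ‖u n - u m‖ ^ 2)
            + α * β * (∑ n, ∑ m, ‖Hob (u n - u m)‖ ^ 2) := by
          simp only [mul_add, Finset.sum_add_distrib, Finset.mul_sum, mul_assoc]
  -- relate pairwise sums to centered sums
  have eQ : ∑ n, ∑ m, ‖Q (w n - w m)‖ ^ 2 = 2 * N * ∑ n, ‖Q (w n - wbar)‖ ^ 2 := by
    have hc : ∀ n, Q (w n - wbar) = Q (w n) - (N : ℝ)⁻¹ • ∑ j, Q (w j) := by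
      intro n; rw [hwbar]; simp [map_sub, _root_.map_smul, map_sum]
    calc ∑ n, ∑ m, ‖Q (w n - w m)‖ ^ 2
        = ∑ n, ∑ m, ‖Q (w n) - Q (w m)‖ ^ 2 := by simp [map_sub]
      _ = 2 * N * ∑ n, ‖Q (w n) - (N : ℝ)⁻¹ • ∑ j, Q (w j)‖ ^ 2 := var_pair hN _
      _ = 2 * N * ∑ n, ‖Q (w n - wbar)‖ ^ 2 := by simp only [← hc]
  have eU : ∑ n, ∑ m, ‖u n - u m‖ ^ 2 = 2 * N * ∑ n, ‖u n - mbar‖ ^ 2 := by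
    rw [var_pair hN u, hmbar]
  have eH : ∑ n, ∑ m, ‖Hob (u n - u m)‖ ^ 2 = 2 * N * ∑ n, ‖Hob (u n - mbar)‖ ^ 2 := by
    have hc : ∀ n, Hob (u n - mbar) = Hob (u n) - (N : ℝ)⁻¹ • ∑ j, Hob (u j) := by
      intro n; rw [hmbar]; simp [map_sub, _root_.map_smul, map_sum]
    calc ∑ n, ∑ m, ‖Hob (u n - u m)‖ ^ 2
        = ∑ n, ∑ m, ‖Hob (u n) - Hob (u m)‖ ^ 2 := by simp [map_sub]
      _ = 2 * N * ∑ n, ‖Hob (u n) - (N : ℝ)⁻¹ • ∑ j, Hob (u j)‖ ^ 2 := var_pair hN _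
      _ = 2 * N * ∑ n, ‖Hob (u n - mbar)‖ ^ 2 := by simp only [← hc]
  -- conclude
  have h2N : (0 : ℝ) < 2 * N := by linarith
  have hT : 2 * (N : ℝ) * (∑ n, ‖Q (w n - wbar)‖ ^ 2)
      ≤ 2 * (N : ℝ) * (α * ∑ n, ‖u n - mbar‖ ^ 2
          + α * β * ∑ n, ‖Hob (u n - mbar)‖ ^ 2) := by
    rw [← eQ]
    refine hsum.trans (le_of_eq ?_)
    rw [eU, eH]; ring
  have hstep : (∑ n, ‖Q (w n - wbar)‖ ^ 2)
      ≤ α * ∑ n, ‖u n - mbar‖ ^ 2 + α * β * ∑ n, ‖Hob (u n - mbar)‖ ^ 2 :=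
    le_of_mul_le_mul_left hT h2N
  have hNinv : (0 : ℝ) ≤ (N : ℝ)⁻¹ := by positivity
  have hrw : α * ((N : ℝ)⁻¹ * ∑ n, ‖u n - mbar‖ ^ 2
        + β * ((N : ℝ)⁻¹ * ∑ n, ‖Hob (u n - mbar)‖ ^ 2))
      = (N : ℝ)⁻¹ * (α * ∑ n, ‖u n - mbar‖ ^ 2
        + α * β * ∑ n, ‖Hob (u n - mbar)‖ ^ 2) := by ring
  rw [hrw]
  exact mul_le_mul_of_nonneg_left hstep hNinv

end EnKF
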